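/- Let X, W be Banach lattices and T : X → W a linear operator preserving finite suprema (T(a ∨ b) = Ta ∨ Tb). Then for every n and x₁,...,xₙ ∈ X, the Krivine functional calculus satisfies T ∘ τ_{(x₁,...,xₙ)} = τ_{(Tx₁,...,Txₙ)} as maps H_n → W. -/

import Mathlib

open Filter Topology

/-- `h : ℝⁿ → ℝ` is positively homogeneous of degree 1. -/
def PosHomog {n : ℕ} (h : (Fin n → ℝ) → ℝ) : Prop :=
  ∀ l : ℝ, 0 ≤ l → ∀ t, h (l • t) = l * h t

/-- Membership in `H_n`: continuous and positively homogeneous of degree 1. -/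
def InHn {n : ℕ} (h : (Fin n → ℝ) → ℝ) : Prop := Continuous h ∧ PosHomog h

/-- The norm of `H_n`: supremum of `|h|` over the unit sphere of the sup norm on `ℝⁿ`. -/
noncomputable def HnNorm {n : ℕ} (h : (Fin n → ℝ) → ℝ) : ℝ :=
  ⨆ t : {t : Fin n → ℝ // ‖t‖ = 1}, |h t.1|

/-- `τ` is the Krivine functional calculus operator associated to `x ∈ Xⁿ`:
a linear map on `H_n` preserving finite suprema sending the `j`-th coordinate
projection to `x j`. -/
def IsKrivine {X : Type*} [NormedAddCommGroup X] [Lattice X] [IsOrderedAddMonoid X]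
    [HasSolidNorm X] [NormedSpace ℝ X]
    {n : ℕ} (x : Fin n → X) (τ : ((Fin n → ℝ) → ℝ) → X) : Prop :=
  (∀ h g, InHn h → InHn g → τ (h + g) = τ h + τ g) ∧
  (∀ (c : ℝ) h, InHn h → τ (c • h) = c • τ h) ∧
  (∀ h g, InHn h → InHn g → τ (h ⊔ g) = τ h ⊔ τ g) ∧
  (∀ j, τ (fun t => t j) = x j)

/-!
Every `h ∈ H_n` can be approximated by elements `g` of the vector sublattice generated by the
coordinate projections, in the sense `|h - g| ≤ ε ‖·‖`: this is the lattice Stone–Weierstrass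
theorem on the unit sphere, extended by homogeneity. On such `g` both `T ∘ τ` and `τ'` are
determined by the values on the projections, so they agree. Since `τ`, `τ'` and `T` are positive,
the approximation gives `|T (τ h) - T (τ g)| ≤ ε T (τ ‖·‖)` and `|τ' h - τ' g| ≤ ε τ' ‖·‖`, and
solidity of the norms bounds `‖T (τ h) - τ' h‖` by a constant times `ε`.
-/

inductive InProjSublattice (n : ℕ) : ((Fin n → ℝ) → ℝ) → Prop
  | proj (j : Fin n) : InProjSublattice n (fun t => t j)
  | zero : InProjSublattice n 0
  | add {f g} : InProjSublattice n f → InProjSublattice n g → InProjSublattice n (f + g)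
  | smul (c : ℝ) {f} : InProjSublattice n f → InProjSublattice n (c • f)
  | sup {f g} : InProjSublattice n f → InProjSublattice n g → InProjSublattice n (f ⊔ g)

section Hn

variable {n : ℕ} {f g : (Fin n → ℝ) → ℝ}

lemma PosHomog.map_zero (hf : PosHomog f) : f 0 = 0 := by
  simpa using hf 0 le_rfl 0

lemma inHn_proj (j : Fin n) : InHn (fun t : Fin n → ℝ => t j) :=
  ⟨continuous_apply j, fun _ _ _ => rfl⟩

lemma inHn_zero : InHn (0 : (Fin n → ℝ) → ℝ) :=
  ⟨continuous_const, fun l _ _ => (mul_zero l).symm⟩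

lemma inHn_norm : InHn (fun t : Fin n → ℝ => ‖t‖) :=
  ⟨continuous_norm, fun l hl t => by
    show ‖l • t‖ = l * ‖t‖
    rw [norm_smul, Real.norm_of_nonneg hl]⟩

lemma InHn.add (hf : InHn f) (hg : InHn g) : InHn (f + g) :=
  ⟨hf.1.add hg.1, fun l hl t => by simp only [Pi.add_apply, hf.2 l hl, hg.2 l hl, mul_add]⟩

lemma InHn.sub (hf : InHn f) (hg : InHn g) : InHn (f - g) :=
  ⟨hf.1.sub hg.1, fun l hl t => by simp only [Pi.sub_apply, hf.2 l hl, hg.2 l hl, mul_sub]⟩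

lemma InHn.smul (c : ℝ) (hf : InHn f) : InHn (c • f) :=
  ⟨hf.1.const_smul c, fun l hl t => by
    simp only [Pi.smul_apply, smul_eq_mul, hf.2 l hl, mul_left_comm]⟩

lemma InHn.sup (hf : InHn f) (hg : InHn g) : InHn (f ⊔ g) :=
  ⟨hf.1.sup hg.1, fun l hl t => by
    simp only [Pi.sup_apply, hf.2 l hl, hg.2 l hl, mul_max_of_nonneg _ _ hl]⟩

lemma InProjSublattice.inHn (hf : InProjSublattice n f) : InHn f := by
  induction hf with
  | proj j => exact inHn_proj j
  | zero => exact inHn_zero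
  | add _ _ ihf ihg => exact ihf.add ihg
  | smul c _ ih => exact ih.smul c
  | sup _ _ ihf ihg => exact ihf.sup ihg

lemma InProjSublattice.inf (hf : InProjSublattice n f) (hg : InProjSublattice n g) :
    InProjSublattice n (f ⊓ g) := by
  convert ((hf.smul (-1)).sup (hg.smul (-1))).smul (-1) using 1
  funext t
  simp only [Pi.inf_apply, Pi.smul_apply, Pi.sup_apply, smul_eq_mul, neg_one_mul,
    max_neg_neg, neg_neg]

end Hn

section Sphere

variable {n : ℕ} {s t : Fin n → ℝ}

lemma exists_inProjSublattice_apply_eq_one (hs : s ≠ 0) :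
    ∃ g, InProjSublattice n g ∧ g s = 1 := by
  obtain ⟨j, hj⟩ : ∃ j, s j ≠ 0 := Function.ne_iff.mp hs
  exact ⟨(s j)⁻¹ • fun t => t j, (InProjSublattice.proj j).smul _, inv_mul_cancel₀ hj⟩

lemma eq_neg_of_ne_of_forall_mul_eq_mul (hs : ‖s‖ = 1) (ht : ‖t‖ = 1) (hst : s ≠ t)
    (hdep : ∀ j k, s j * t k = s k * t j) : t = -s := by
  obtain ⟨j, hj⟩ : ∃ j, s j ≠ 0 :=
    Function.ne_iff.mp (ne_zero_of_norm_ne_zero (hs.trans_ne one_ne_zero))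
  have hts : t = (t j / s j) • s := by
    funext k
    rw [Pi.smul_apply, smul_eq_mul, div_mul_eq_mul_div, eq_div_iff hj]
    linarith [hdep j k]
  have habs : |t j / s j| = 1 := by
    simpa [norm_smul, abs_div, hs, ht] using (congrArg norm hts).symm
  rcases abs_eq zero_le_one |>.mp habs with hc | hc
  · exact absurd (by rw [hts, hc, one_smul]) hst
  · rw [hts, hc, neg_one_smul]

lemma exists_inProjSublattice_apply_eq_one_apply_eq_zero (hs : ‖s‖ = 1) (ht : ‖t‖ = 1)
    (hst : s ≠ t) : ∃ g, InProjSublattice n g ∧ g s = 1 ∧ g t = 0 := by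
  by_cases hdep : ∃ j k, s j * t k ≠ s k * t j
  · -- Cramer's rule in the coordinates `j, k`.
    obtain ⟨j, k, hjk⟩ := hdep
    have hD : s j * t k - s k * t j ≠ 0 := sub_ne_zero.mpr hjk
    refine ⟨(s j * t k - s k * t j)⁻¹ • (t k • (fun t => t j) + (-t j) • fun t => t k),
      (((InProjSublattice.proj j).smul _).add ((InProjSublattice.proj k).smul _)).smul _,
      ?_, ?_⟩
    · simp only [Pi.smul_apply, Pi.add_apply, smul_eq_mul]
      field_simp
      ring
    · simp only [Pi.smul_apply, Pi.add_apply, smul_eq_mul]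
      ring
  · -- Otherwise `t = -s`, and a positive part of a coordinate does the job.
    push Not at hdep
    rw [eq_neg_of_ne_of_forall_mul_eq_mul hs ht hst hdep]
    obtain ⟨j, hj⟩ : ∃ j, s j ≠ 0 :=
      Function.ne_iff.mp (ne_zero_of_norm_ne_zero (hs.trans_ne one_ne_zero))
    refine ⟨((s j)⁻¹ • fun t => t j) ⊔ 0, ((InProjSublattice.proj j).smul _).sup .zero, ?_, ?_⟩ <;>
      simp [hj]

def projSublatticeOnSphere (n : ℕ) : Set C(Metric.sphere (0 : Fin n → ℝ) 1, ℝ) :=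
  {F | ∃ g, InProjSublattice n g ∧ ∀ u, F u = g u}

lemma restrict_mem_projSublatticeOnSphere {g : (Fin n → ℝ) → ℝ} (hg : InProjSublattice n g) :
    (ContinuousMap.mk g hg.inHn.1).restrict _ ∈ projSublatticeOnSphere n :=
  ⟨g, hg, fun _ => rfl⟩

lemma separatesPointsStrongly_projSublatticeOnSphere :
    (projSublatticeOnSphere n).SeparatesPointsStrongly := by
  intro v s t
  by_cases hst : s = t
  · subst hst
    obtain ⟨g, hg, hgs⟩ := exists_inProjSublattice_apply_eq_one
      (ne_zero_of_mem_unit_sphere s)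
    refine ⟨_, restrict_mem_projSublatticeOnSphere (hg.smul (v s)), ?_, ?_⟩ <;>
      simp [hgs]
  · have hs : ‖(s : Fin n → ℝ)‖ = 1 := mem_sphere_zero_iff_norm.mp s.2
    have ht : ‖(t : Fin n → ℝ)‖ = 1 := mem_sphere_zero_iff_norm.mp t.2
    obtain ⟨g₁, hg₁, hg₁s, hg₁t⟩ :=
      exists_inProjSublattice_apply_eq_one_apply_eq_zero hs ht (Subtype.coe_ne_coe.mpr hst)
    obtain ⟨g₂, hg₂, hg₂t, hg₂s⟩ := exists_inProjSublattice_apply_eq_one_apply_eq_zero ht hs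
      (Subtype.coe_ne_coe.mpr (Ne.symm hst))
    refine ⟨_, restrict_mem_projSublatticeOnSphere ((hg₁.smul (v s)).add (hg₂.smul (v t))),
      ?_, ?_⟩ <;>
      simp [hg₁s, hg₁t, hg₂s, hg₂t]

lemma closure_projSublatticeOnSphere : closure (projSublatticeOnSphere n) = ⊤ := by
  have : CompactSpace (Metric.sphere (0 : Fin n → ℝ) 1) :=
    isCompact_iff_compactSpace.mp (isCompact_sphere 0 1)
  refine ContinuousMap.sublattice_closure_eq_top _
    ⟨_, restrict_mem_projSublatticeOnSphere .zero⟩ ?_ ?_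
    separatesPointsStrongly_projSublatticeOnSphere
  · rintro _ ⟨f, hf, hFf⟩ _ ⟨g, hg, hGg⟩
    exact ⟨f ⊓ g, hf.inf hg, fun u => by simp [hFf u, hGg u]⟩
  · rintro _ ⟨f, hf, hFf⟩ _ ⟨g, hg, hGg⟩
    exact ⟨f ⊔ g, hf.sup hg, fun u => by simp [hFf u, hGg u]⟩

end Sphere

lemma PosHomog.abs_sub_le_mul_norm {n : ℕ} {f g : (Fin n → ℝ) → ℝ} (hf : PosHomog f)
    (hg : PosHomog g) {ε : ℝ} (hfg : ∀ u, ‖u‖ = 1 → |f u - g u| ≤ ε) (t : Fin n → ℝ) :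
    |f t - g t| ≤ ε * ‖t‖ := by
  rcases eq_or_ne t 0 with rfl | ht
  · simp [hf.map_zero, hg.map_zero]
  have htpos : 0 < ‖t‖ := norm_pos_iff.mpr ht
  set u := ‖t‖⁻¹ • t
  have hu : ‖u‖ = 1 := by rw [norm_smul, norm_inv, norm_norm, inv_mul_cancel₀ htpos.ne']
  have htu : f t - g t = ‖t‖ * (f u - g u) := by
    rw [mul_sub, ← hf _ htpos.le, ← hg _ htpos.le, smul_smul, mul_inv_cancel₀ htpos.ne', one_smul]
  rw [htu, abs_mul, abs_of_pos htpos, mul_comm ε]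
  exact mul_le_mul_of_nonneg_left (hfg u hu) htpos.le

lemma exists_inProjSublattice_abs_sub_le {n : ℕ} {h : (Fin n → ℝ) → ℝ} (hh : InHn h) {ε : ℝ}
    (hε : 0 < ε) : ∃ g, InProjSublattice n g ∧ ∀ t, |h t - g t| ≤ ε * ‖t‖ := by
  have hmem : (ContinuousMap.mk h hh.1).restrict (Metric.sphere 0 1) ∈
      closure (projSublatticeOnSphere n) := by
    rw [closure_projSublatticeOnSphere]; trivial
  obtain ⟨G, ⟨g, hg, hGg⟩, hdist⟩ := Metric.mem_closure_iff.mp hmem ε hε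
  refine ⟨g, hg, hh.2.abs_sub_le_mul_norm hg.inHn.2 fun u hu => ?_⟩
  have := (ContinuousMap.dist_apply_le_dist (⟨u, mem_sphere_zero_iff_norm.mpr hu⟩ :
    Metric.sphere (0 : Fin n → ℝ) 1)).trans_lt hdist
  rw [hGg, Real.dist_eq] at this
  exact this.le

lemma eq_of_forall_pos_norm_sub_le_mul {E : Type*} [NormedAddCommGroup E] {a b : E} {C : ℝ}
    (h : ∀ ε > 0, ‖a - b‖ ≤ ε * C) : a = b := by
  have hC : 0 ≤ C := by simpa using (norm_nonneg _).trans (h 1 one_pos)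
  refine eq_of_forall_dist_le fun δ hδ => ?_
  calc dist a b ≤ δ / (C + 1) * C := dist_eq_norm a b ▸ h _ (by positivity)
    _ ≤ δ := by
      rw [div_mul_eq_mul_div, div_le_iff₀ (by positivity)]
      nlinarith

lemma map_abs_of_map_sup {X W F : Type*} [Lattice X] [AddGroup X] [Lattice W] [AddGroup W]
    [FunLike F X W] [AddMonoidHomClass F X W] (T : F) (hT : ∀ a b, T (a ⊔ b) = T a ⊔ T b)
    (a : X) : T |a| = |T a| := by
  rw [abs, abs, hT, map_neg]

lemma norm_le_mul_norm_of_abs_le_smul {E : Type*} [NormedAddCommGroup E] [Lattice E]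
    [IsOrderedAddMonoid E] [HasSolidNorm E] [NormedSpace ℝ E] {a b : E} {ε : ℝ} (hε : 0 ≤ ε)
    (h : |a| ≤ ε • b) : ‖a‖ ≤ ε * ‖b‖ := by
  have hb : 0 ≤ ε • b := (abs_nonneg a).trans h
  calc ‖a‖ ≤ ‖ε • b‖ := norm_le_norm_of_abs_le_abs (by rwa [abs_of_nonneg hb])
    _ = ε * ‖b‖ := by rw [norm_smul, Real.norm_of_nonneg hε]

section Krivine

variable {X W : Type*} [NormedAddCommGroup X] [Lattice X] [IsOrderedAddMonoid X]
  [HasSolidNorm X] [NormedSpace ℝ X] [NormedAddCommGroup W] [Lattice W] [IsOrderedAddMonoid W]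
  [HasSolidNorm W] [NormedSpace ℝ W]
  {n : ℕ} {x : Fin n → X} {τ : ((Fin n → ℝ) → ℝ) → X} {f g : (Fin n → ℝ) → ℝ}

lemma IsKrivine.map_zero (hτ : IsKrivine x τ) : τ 0 = 0 := by
  simpa using hτ.2.1 0 0 inHn_zero

lemma IsKrivine.map_sub (hτ : IsKrivine x τ) (hf : InHn f) (hg : InHn g) :
    τ (f - g) = τ f - τ g :=
  eq_sub_of_add_eq (by rw [← hτ.1 _ _ (hf.sub hg) hg, sub_add_cancel])

lemma IsKrivine.mono (hτ : IsKrivine x τ) (hf : InHn f) (hg : InHn g) (hfg : f ≤ g) :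
    τ f ≤ τ g := by
  rw [← sup_eq_right.mpr hfg, hτ.2.2.1 _ _ hf hg]
  exact le_sup_left

lemma IsKrivine.abs_sub_le (hτ : IsKrivine x τ) (hf : InHn f) (hg : InHn g) {ε : ℝ}
    (hfg : ∀ t, |f t - g t| ≤ ε * ‖t‖) : |τ f - τ g| ≤ ε • τ (fun t => ‖t‖) := by
  have hN := (inHn_norm (n := n)).smul ε
  rw [abs_le', neg_sub, ← hτ.map_sub hf hg, ← hτ.map_sub hg hf, ← hτ.2.1 ε _ inHn_norm]
  exact ⟨hτ.mono (hf.sub hg) hN fun t => (le_abs_self _).trans (hfg t),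
    hτ.mono (hg.sub hf) hN fun t =>
      ((le_abs_self _).trans (abs_sub_comm (g t) (f t)).le).trans (hfg t)⟩

lemma IsKrivine.norm_map_sub_le (hτ : IsKrivine x τ) (T : X →ₗ[ℝ] W)
    (hT : ∀ a b, T (a ⊔ b) = T a ⊔ T b) (hf : InHn f) (hg : InHn g) {ε : ℝ} (hε : 0 ≤ ε)
    (hfg : ∀ t, |f t - g t| ≤ ε * ‖t‖) :
    ‖T (τ f) - T (τ g)‖ ≤ ε * ‖T (τ fun t => ‖t‖)‖ := by
  refine norm_le_mul_norm_of_abs_le_smul hε ?_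
  rw [← _root_.map_sub T, ← map_abs_of_map_sup T hT, ← map_smul]
  exact OrderHomClass.mono (⟨T, hT⟩ : SupHom X W) (hτ.abs_sub_le hf hg hfg)

lemma IsKrivine.map_eq_of_inProjSublattice (hτ : IsKrivine x τ) (T : X →ₗ[ℝ] W)
    (hT : ∀ a b, T (a ⊔ b) = T a ⊔ T b) {τ' : ((Fin n → ℝ) → ℝ) → W}
    (hτ' : IsKrivine (fun j => T (x j)) τ') (hf : InProjSublattice n f) : T (τ f) = τ' f := by
  induction hf with
  | proj j => rw [hτ.2.2.2 j, hτ'.2.2.2 j]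
  | zero => rw [hτ.map_zero, hτ'.map_zero, _root_.map_zero T]
  | add hf hg ihf ihg =>
    rw [hτ.1 _ _ hf.inHn hg.inHn, map_add, ihf, ihg, hτ'.1 _ _ hf.inHn hg.inHn]
  | smul c hf ih => rw [hτ.2.1 c _ hf.inHn, map_smul, ih, hτ'.2.1 c _ hf.inHn]
  | sup hf hg ihf ihg =>
    rw [hτ.2.2.1 _ _ hf.inHn hg.inHn, hT, ihf, ihg, hτ'.2.2.1 _ _ hf.inHn hg.inHn]

end Krivine

/-- If `T : X → W` is linear and preserves finite suprema, then
`T ∘ τ_{(x₁,...,xₙ)} = τ_{(Tx₁,...,Txₙ)}` on `H_n`. -/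
theorem krivine_comp_latticeHom {X W : Type*} [NormedAddCommGroup X] [Lattice X]
    [IsOrderedAddMonoid X] [HasSolidNorm X]
    [NormedSpace ℝ X] [NormedAddCommGroup W] [Lattice W] [IsOrderedAddMonoid W]
    [HasSolidNorm W] [NormedSpace ℝ W]
    (T : X →ₗ[ℝ] W) (hT : ∀ a b : X, T (a ⊔ b) = T a ⊔ T b)
    {n : ℕ} (x : Fin n → X)
    (τ : ((Fin n → ℝ) → ℝ) → X) (hτ : IsKrivine x τ)
    (τ' : ((Fin n → ℝ) → ℝ) → W) (hτ' : IsKrivine (fun j => T (x j)) τ')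
    (h : (Fin n → ℝ) → ℝ) (hh : InHn h) :
    T (τ h) = τ' h := by
  refine eq_of_forall_pos_norm_sub_le_mul
    (C := ‖T (τ fun t => ‖t‖)‖ + ‖τ' fun t => ‖t‖‖) fun ε hε => ?_
  obtain ⟨g, hg, hhg⟩ := exists_inProjSublattice_abs_sub_le hh hε
  have hXg := hτ.norm_map_sub_le T hT hh hg.inHn hε.le hhg
  have hWg := hτ'.norm_map_sub_le LinearMap.id (fun _ _ => rfl) hh hg.inHn hε.le hhg
  rw [LinearMap.id_apply, LinearMap.id_apply, LinearMap.id_apply, norm_sub_rev] at hWg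
  rw [hτ.map_eq_of_inProjSublattice T hT hτ' hg] at hXg
  calc ‖T (τ h) - τ' h‖ ≤ ‖T (τ h) - τ' g‖ + ‖τ' g - τ' h‖ := norm_sub_le_norm_sub_add_norm_sub ..
    _ ≤ ε * ‖T (τ fun t => ‖t‖)‖ + ε * ‖τ' fun t => ‖t‖‖ := add_le_add hXg hWg
    _ = ε * (‖T (τ fun t => ‖t‖)‖ + ‖τ' fun t => ‖t‖‖) := (mul_add ..).symm
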